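/- Cover the plane with overlapping axis-aligned square cells of side β whose centers form a grid of spacing β − 2δ, where 0 < δ < β/4. Then: (1) every point of the plane is contained in at least one cell and at most four cells; (2) any segment whose two endpoints lie in no common cell has length greater than δ. -/

import Mathlib

/-!
Write `s = β - 2δ` for the grid spacing. A cell is a product of intervals `[k s, k s + β]`, so
everything reduces to one coordinate. Since `β - s = 2δ`, two reals at distance at most `2δ` both
lie in the interval starting at the grid point just below the smaller one; and since `β < 2s`,
a real lies in at most two consecutive intervals, so a point lies in at most `2 · 2` cells.
-/

/-- Membership of a point `p` in the grid cell with index `(i, j)`: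
cells are axis-aligned squares of side `β` whose lower-left corners form the
grid `((β - 2δ)·i, (β - 2δ)·j)`, so that adjacent cells overlap. -/
def InGridCell (β δ : ℝ) (i j : ℤ) (p : EuclideanSpace ℝ (Fin 2)) : Prop :=
  (i : ℝ) * (β - 2 * δ) ≤ p 0 ∧ p 0 ≤ (i : ℝ) * (β - 2 * δ) + β ∧
  (j : ℝ) * (β - 2 * δ) ≤ p 1 ∧ p 1 ≤ (j : ℝ) * (β - 2 * δ) + β

open Set

section Interval

variable {s L : ℝ}

lemma exists_mem_Icc_int_mul_of_abs_sub_le (hs : 0 < s) {x y : ℝ} (hxy : |x - y| ≤ L - s) :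
    ∃ k : ℤ, x ∈ Icc (k * s) (k * s + L) ∧ y ∈ Icc (k * s) (k * s + L) := by
  set a := min x y
  have hlow := Int.sub_floor_div_mul_nonneg a hs
  have hhigh := Int.sub_floor_div_mul_lt a hs
  have hspread : max x y - a ≤ L - s := by rwa [max_sub_min_eq_abs']
  refine ⟨⌊a / s⌋, ⟨?_, ?_⟩, ⟨?_, ?_⟩⟩ <;>
    linarith [min_le_left x y, min_le_right x y, le_max_left x y, le_max_right x y]

lemma eq_floor_div_sub_one_or_eq_floor_div (hs : 0 < s) (hL : L < 2 * s) {k : ℤ} {x : ℝ}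
    (hx : x ∈ Icc (k * s) (k * s + L)) : k = ⌊x / s⌋ - 1 ∨ k = ⌊x / s⌋ := by
  have hk_le : k ≤ ⌊x / s⌋ := Int.le_floor.2 <| (le_div_iff₀ hs).2 hx.1
  have hfloor_lt : ⌊x / s⌋ < k + 2 := Int.floor_lt.2 <| (div_lt_iff₀ hs).2 <| by
    push_cast
    linarith [hx.2]
  omega

end Interval

section GridCell

variable {β δ : ℝ}

lemma inGridCell_iff {i j : ℤ} {p : EuclideanSpace ℝ (Fin 2)} :
    InGridCell β δ i j p ↔
      p 0 ∈ Icc (i * (β - 2 * δ)) (i * (β - 2 * δ) + β) ∧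
        p 1 ∈ Icc (j * (β - 2 * δ)) (j * (β - 2 * δ) + β) := by
  simp only [InGridCell, mem_Icc, and_assoc]

lemma exists_inGridCell_of_dist_le (hs : 0 < β - 2 * δ) {p q : EuclideanSpace ℝ (Fin 2)}
    (hpq : dist p q ≤ 2 * δ) : ∃ i j : ℤ, InGridCell β δ i j p ∧ InGridCell β δ i j q := by
  have hcoord (k : Fin 2) := exists_mem_Icc_int_mul_of_abs_sub_le hs (L := β) (x := p k)
    (y := q k) (by rw [← Real.dist_eq]; linarith [PiLp.dist_apply_le p q k])
  obtain ⟨i, hpi, hqi⟩ := hcoord 0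
  obtain ⟨j, hpj, hqj⟩ := hcoord 1
  exact ⟨i, j, inGridCell_iff.2 ⟨hpi, hpj⟩, inGridCell_iff.2 ⟨hqi, hqj⟩⟩

lemma exists_finset_card_le_four_of_inGridCell (hs : 0 < β - 2 * δ) (hβ : β < 2 * (β - 2 * δ))
    (p : EuclideanSpace ℝ (Fin 2)) : ∃ S : Finset (ℤ × ℤ), S.card ≤ 4 ∧
      ∀ i j : ℤ, InGridCell β δ i j p → (i, j) ∈ S := by
  set s := β - 2 * δ
  refine ⟨{⌊p 0 / s⌋ - 1, ⌊p 0 / s⌋} ×ˢ {⌊p 1 / s⌋ - 1, ⌊p 1 / s⌋}, ?_, fun i j hij => ?_⟩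
  · exact (Finset.card_product _ _).trans_le (Nat.mul_le_mul Finset.card_le_two Finset.card_le_two)
  · obtain ⟨hi, hj⟩ := inGridCell_iff.1 hij
    simpa only [Finset.mem_product, Finset.mem_insert, Finset.mem_singleton] using
      ⟨eq_floor_div_sub_one_or_eq_floor_div hs hβ hi, eq_floor_div_sub_one_or_eq_floor_div hs hβ hj⟩

end GridCell

/-- for the overlapping grid of square cells of side `β` with
spacing `β − 2δ`, `0 < δ < β/4`: (1) every point lies in at least one and at
most four cells; (2) any two points at distance at most `δ` lie in a common
cell (equivalently, a segment whose endpoints share no cell is longer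
than `δ`). -/
theorem stmt_6 (β δ : ℝ) (hδ : 0 < δ) (hδβ : δ < β / 4) :
    (∀ p : EuclideanSpace ℝ (Fin 2), ∃ i j : ℤ, InGridCell β δ i j p) ∧
    (∀ p : EuclideanSpace ℝ (Fin 2), ∃ S : Finset (ℤ × ℤ), S.card ≤ 4 ∧
      ∀ i j : ℤ, InGridCell β δ i j p → (i, j) ∈ S) ∧
    (∀ p q : EuclideanSpace ℝ (Fin 2), dist p q ≤ δ →
      ∃ i j : ℤ, InGridCell β δ i j p ∧ InGridCell β δ i j q) := by
  have hs : 0 < β - 2 * δ := by linarith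
  refine ⟨fun p => ?_, exists_finset_card_le_four_of_inGridCell hs (by linarith), fun p q hpq => ?_⟩
  · obtain ⟨i, j, hp, -⟩ := exists_inGridCell_of_dist_le hs (p := p) (q := p) (by rw [dist_self]; linarith)
    exact ⟨i, j, hp⟩
  · exact exists_inGridCell_of_dist_le hs (by linarith)
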